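/- arXiv:2307.15181 — 2 statements merged into one kernel-verified Lean document; each statement's English description precedes it below -/
import Mathlib

section
/- Suppose that for n units the joint vector of potential responses (R_1(1),…,R_n(1),R_1(0),…,R_n(0)) is conditionally independent of the assignment vector (A_1,…,A_n) given the σ-algebra generated by (X_1,…,X_n), that the triples (R_i(1), R_i(0), X_i), 1 ≤ i ≤ n, are i.i.d., that there is a single measurable function h: ℝ^{d_x} → [0,1] such that P(A_i = 1 | X_i) = h(X_i) almost surely for every 1 ≤ i ≤ n, and define the observed response R_i = A_i·R_i(1) + (1 − A_i)·R_i(0). Then the random vectors (X_i, A_i, R_i), 1 ≤ i ≤ n, are identically distributed, i.e., the pushforward law of (X_i, A_i, R_i) is the same for every i. (Lemma A.5, second conclusion.) -/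
/-!
Write `T_i = (X_i, R_i(1), R_i(0))`. Since `A_i ∈ {0, 1}` and `R_i` is a function of
`(T_i, A_i)`, the law of `(X_i, A_i, R_i)` is determined by the law of `T_i` and the law of
`T_i` on the event `{A_i = 1}`. The latter has density `h(X_i)` with respect to the former:
conditioning on all the covariates `σ(X)`, unconfoundedness factorises
`P(X_i ∈ s, (R_i(1), R_i(0)) ∈ W, A_i = 1)`; because `T_i` is independent of the other
covariates, `P((R_i(1), R_i(0)) ∈ W | σ(X)) = P((R_i(1), R_i(0)) ∈ W | X_i)`, after which the
tower property replaces `P(A_i = 1 | σ(X))` by the propensity `h(X_i)`. Both laws are the same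
for every `i` because the `T_i` are identically distributed.
-/

open MeasureTheory ProbabilityTheory

section PiSystem

variable {Ω : Type*}

lemma isPiSystem_image2_inter {S T : Set (Set Ω)} (hS : IsPiSystem S) (hT : IsPiSystem T) :
    IsPiSystem (Set.image2 (· ∩ ·) S T) := by
  rintro _ ⟨s₁, hs₁, t₁, ht₁, rfl⟩ _ ⟨s₂, hs₂, t₂, ht₂, rfl⟩ hne
  rw [Set.inter_inter_inter_comm] at hne ⊢
  exact ⟨_, hS _ hs₁ _ hs₂ (hne.mono Set.inter_subset_left),
    _, hT _ ht₁ _ ht₂ (hne.mono Set.inter_subset_right), rfl⟩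

lemma generateFrom_image2_inter_measurableSet (m₁ m₂ : MeasurableSpace Ω) :
    MeasurableSpace.generateFrom
      (Set.image2 (· ∩ ·) {s | MeasurableSet[m₁] s} {s | MeasurableSet[m₂] s}) = m₁ ⊔ m₂ := by
  refine le_antisymm (MeasurableSpace.generateFrom_le ?_) (sup_le ?_ ?_)
  · rintro _ ⟨s, hs, t, ht, rfl⟩
    exact (le_sup_left (b := m₂) s hs).inter (le_sup_right (a := m₁) t ht)
  · exact fun s hs ↦ MeasurableSpace.measurableSet_generateFrom
      ⟨s, hs, Set.univ, MeasurableSet.univ, Set.inter_univ s⟩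
  · exact fun t ht ↦ MeasurableSpace.measurableSet_generateFrom
      ⟨Set.univ, MeasurableSet.univ, t, ht, Set.univ_inter t⟩

end PiSystem

section CondExp

variable {Ω : Type*} {m m₁ m₂ m₃ : MeasurableSpace Ω} {mΩ : MeasurableSpace Ω} {μ : Measure Ω}
  {f : Ω → ℝ}

lemma setIntegral_inter_eq_mul_measureReal_of_indep (hm₁ : m₁ ≤ mΩ) (hm₂ : m₂ ≤ mΩ)
    (hind : Indep m₁ m₂ μ) (hf : StronglyMeasurable[m₁] f) {s t : Set Ω}
    (hs : MeasurableSet[m₁] s) (ht : MeasurableSet[m₂] t) :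
    ∫ ω in s ∩ t, f ω ∂μ = (∫ ω in s, f ω ∂μ) * μ.real t := by
  have hg : StronglyMeasurable[m₁] (s.indicator f) := hf.indicator hs
  have hindep : (t.indicator fun _ ↦ (1 : ℝ)) ⟂ᵢ[μ] s.indicator f :=
    Indep.indicator_indepFun 1 ht (indep_of_indep_of_le_right hind.symm hg.measurable.comap_le)
  have hprod : t.indicator (s.indicator f) = (t.indicator fun _ ↦ (1 : ℝ)) * s.indicator f := by
    ext ω; by_cases hω : ω ∈ t <;> simp [hω]
  rw [Set.inter_comm, ← setIntegral_indicator (hm₁ s hs), ← integral_indicator (hm₂ t ht), hprod,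
    hindep.integral_mul_eq_mul_integral
      ((stronglyMeasurable_const.indicator ht).mono hm₂).aestronglyMeasurable
      (hg.mono hm₁).aestronglyMeasurable,
    integral_indicator_const _ (hm₂ t ht), integral_indicator (hm₁ s hs), smul_eq_mul, mul_one,
    mul_comm]

lemma ae_norm_condExp_indicator_le_one (m : MeasurableSpace Ω) (s : Set Ω) :
    ∀ᵐ ω ∂μ, ‖(μ⟦s | m⟧) ω‖ ≤ 1 := by
  have h01 : ∀ᵐ ω ∂μ, |s.indicator (fun _ ↦ (1 : ℝ)) ω| ≤ 1 :=
    ae_of_all _ fun ω ↦ by by_cases hω : ω ∈ s <;> simp [hω]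
  simpa only [Real.norm_eq_abs] using ae_bdd_abs_condExp_of_ae_bdd_abs (m := m) h01

variable [IsFiniteMeasure μ]

theorem condExp_sup_ae_eq_condExp_of_indep (h₁₃ : m₁ ≤ m₃) (hm₃ : m₃ ≤ mΩ)
    (hm₂ : m₂ ≤ mΩ) (hind : Indep m₃ m₂ μ) (hf : StronglyMeasurable[m₃] f) (hfi : Integrable f μ) :
    μ[f | m₁ ⊔ m₂] =ᵐ[μ] μ[f | m₁] := by
  have hm₁ : m₁ ≤ mΩ := h₁₃.trans hm₃
  have hm : m₁ ⊔ m₂ ≤ mΩ := sup_le hm₁ hm₂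
  have hsm : AEStronglyMeasurable[m₁ ⊔ m₂] (μ[f | m₁]) μ :=
    (stronglyMeasurable_condExp.mono (le_sup_left : m₁ ≤ m₁ ⊔ m₂)).aestronglyMeasurable
  suffices ∀ s, MeasurableSet[m₁ ⊔ m₂] s → ∫ ω in s, μ[f | m₁] ω ∂μ = ∫ ω in s, f ω ∂μ from
    (ae_eq_condExp_of_forall_setIntegral_eq hm hfi
      (fun _ _ _ ↦ integrable_condExp.integrableOn) (fun s hs _ ↦ this s hs) hsm).symm
  intro s hs
  induction s, hs using MeasurableSpace.induction_on_inter
      (generateFrom_image2_inter_measurableSet m₁ m₂).symm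
      (isPiSystem_image2_inter (@MeasurableSpace.isPiSystem_measurableSet _ m₁)
        (@MeasurableSpace.isPiSystem_measurableSet _ m₂)) with
  | empty => simp
  | basic _ hst =>
    obtain ⟨s, hs, t, ht, rfl⟩ := hst
    rw [setIntegral_inter_eq_mul_measureReal_of_indep hm₃ hm₂ hind
        (stronglyMeasurable_condExp.mono h₁₃) (h₁₃ s hs) ht,
      setIntegral_inter_eq_mul_measureReal_of_indep hm₃ hm₂ hind hf (h₁₃ s hs) ht,
      setIntegral_condExp hm₁ hfi hs]
  | compl t ht ih =>
    rw [setIntegral_compl (hm t ht) integrable_condExp, setIntegral_compl (hm t ht) hfi, ih,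
      integral_condExp hm₁]
  | iUnion s hdisj hs ih =>
    rw [integral_iUnion (fun i ↦ hm _ (hs i)) hdisj integrable_condExp.integrableOn,
      integral_iUnion (fun i ↦ hm _ (hs i)) hdisj hfi.integrableOn]
    exact tsum_congr ih

lemma setIntegral_mul_condExp (hm : m ≤ mΩ) {g : Ω → ℝ} (hg : StronglyMeasurable[m] g) {C : ℝ}
    (hg_bdd : ∀ᵐ ω ∂μ, ‖g ω‖ ≤ C) (hf : Integrable f μ) {s : Set Ω} (hs : MeasurableSet[m] s) :
    ∫ ω in s, g ω * μ[f | m] ω ∂μ = ∫ ω in s, g ω * f ω ∂μ := by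
  rw [← setIntegral_condExp hm (hf.bdd_mul (hg.mono hm).aestronglyMeasurable hg_bdd) hs]
  exact integral_congr_ae (ae_restrict_of_ae (condExp_mul_of_stronglyMeasurable_left hg
    (hf.bdd_mul (hg.mono hm).aestronglyMeasurable hg_bdd) hf).symm)

theorem measureReal_inter_inter_eq_setIntegral_of_condIndep
    (h₁₃ : m₁ ≤ m₃) (hm₃ : m₃ ≤ mΩ) (hm₂ : m₂ ≤ mΩ) (hind : Indep m₃ m₂ μ)
    {E S A : Set Ω} (hE : MeasurableSet[m₁] E) (hS : MeasurableSet[m₃] S) (hA : MeasurableSet A)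
    (hSA : μ⟦S ∩ A | m₁ ⊔ m₂⟧ =ᵐ[μ] μ⟦S | m₁ ⊔ m₂⟧ * μ⟦A | m₁ ⊔ m₂⟧)
    {H : Ω → ℝ} (hH : StronglyMeasurable[m₁] H) (hH_bdd : ∀ ω, ‖H ω‖ ≤ 1)
    (hAH : μ⟦A | m₁⟧ =ᵐ[μ] H) :
    μ.real (E ∩ S ∩ A) = ∫ ω in E ∩ S, H ω ∂μ := by
  have hm₁ : m₁ ≤ mΩ := h₁₃.trans hm₃
  have hm : m₁ ⊔ m₂ ≤ mΩ := sup_le hm₁ hm₂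
  have hS' : MeasurableSet S := hm₃ S hS
  have hE' : MeasurableSet[m₁ ⊔ m₂] E := le_sup_left (b := m₂) E hE
  calc μ.real (E ∩ S ∩ A)
      = ∫ ω in E, (S ∩ A).indicator (fun _ ↦ (1 : ℝ)) ω ∂μ := by
        rw [setIntegral_indicator (hS'.inter hA), setIntegral_const, Set.inter_assoc,
          smul_eq_mul, mul_one]
    _ = ∫ ω in E, (μ⟦S | m₁ ⊔ m₂⟧) ω * (μ⟦A | m₁ ⊔ m₂⟧) ω ∂μ := by
        rw [← setIntegral_condExp hm ((integrable_const 1).indicator (hS'.inter hA)) hE']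
        exact integral_congr_ae (ae_restrict_of_ae hSA)
    _ = ∫ ω in E, (μ⟦S | m₁⟧) ω * (μ⟦A | m₁ ⊔ m₂⟧) ω ∂μ :=
        integral_congr_ae <| ae_restrict_of_ae <| (condExp_sup_ae_eq_condExp_of_indep h₁₃ hm₃
          hm₂ hind (stronglyMeasurable_const.indicator hS)
          ((integrable_const 1).indicator hS')).mul .rfl
    _ = ∫ ω in E, (μ⟦S | m₁⟧) ω * H ω ∂μ := by
        rw [← setIntegral_mul_condExp hm₁ stronglyMeasurable_condExp
          (ae_norm_condExp_indicator_le_one m₁ S) integrable_condExp hE]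
        exact integral_congr_ae <| ae_restrict_of_ae <| Filter.EventuallyEq.rfl.mul
          ((condExp_condExp_of_le (le_sup_left (b := m₂)) hm).trans hAH)
    _ = ∫ ω in E, H ω * S.indicator (fun _ ↦ (1 : ℝ)) ω ∂μ := by
        simp_rw [mul_comm _ (H _)]
        exact setIntegral_mul_condExp hm₁ hH (ae_of_all _ hH_bdd)
          ((integrable_const 1).indicator hS') hE
    _ = ∫ ω in E ∩ S, H ω ∂μ := by
        rw [← setIntegral_indicator hS']
        congr with ω
        by_cases hω : ω ∈ S <;> simp [hω]

end CondExp

section Laws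

variable {Ω β γ : Type*} {mΩ : MeasurableSpace Ω} [MeasurableSpace β] [MeasurableSpace γ]
  {μ : Measure Ω}

lemma MeasureTheory.Measure.eq_of_add_eq_add_left {ν ν₁ ν₂ : Measure β} [IsFiniteMeasure ν]
    (h : ν + ν₁ = ν + ν₂) : ν₁ = ν₂ := by
  ext s _
  exact (ENNReal.add_right_inj (measure_ne_top ν s)).1 (by simpa using congrArg (· s) h)

lemma map_prod_eq_add_of_zero_or_one {T : Ω → β} {a : Ω → ℝ} (hT : Measurable T)
    (ha : Measurable a) (h01 : ∀ ω, a ω = 0 ∨ a ω = 1) :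
    μ.map (fun ω ↦ (T ω, a ω)) =
      ((μ.restrict {ω | a ω = 1}).map T).map (fun b ↦ (b, (1 : ℝ))) +
        ((μ.restrict {ω | a ω = 1}ᶜ).map T).map (fun b ↦ (b, (0 : ℝ))) := by
  have hS : MeasurableSet {ω | a ω = 1} := ha (measurableSet_singleton 1)
  conv_lhs => rw [← μ.restrict_add_restrict_compl hS]
  rw [Measure.map_add _ _ (hT.prodMk ha), Measure.map_map (by fun_prop) hT,
    Measure.map_map (by fun_prop) hT]
  congr 1 <;> refine Measure.map_congr ?_
  · filter_upwards [ae_restrict_mem hS] with ω hω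
    simp only [Function.comp_apply, show a ω = 1 from hω]
  · filter_upwards [ae_restrict_mem hS.compl] with ω hω
    have : a ω = 0 := (h01 ω).resolve_right hω
    simp only [Function.comp_apply, this]

lemma map_prod_eq_of_zero_or_one [IsFiniteMeasure μ] {T₁ T₂ : Ω → β} {a₁ a₂ : Ω → ℝ}
    (hT₁ : Measurable T₁) (hT₂ : Measurable T₂) (ha₁ : Measurable a₁) (ha₂ : Measurable a₂)
    (h01₁ : ∀ ω, a₁ ω = 0 ∨ a₁ ω = 1) (h01₂ : ∀ ω, a₂ ω = 0 ∨ a₂ ω = 1)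
    (hT : μ.map T₁ = μ.map T₂)
    (hT1 : (μ.restrict {ω | a₁ ω = 1}).map T₁ = (μ.restrict {ω | a₂ ω = 1}).map T₂) :
    μ.map (fun ω ↦ (T₁ ω, a₁ ω)) = μ.map (fun ω ↦ (T₂ ω, a₂ ω)) := by
  have hsplit (T : Ω → β) (a : Ω → ℝ) (hT : Measurable T) (ha : Measurable a) :
      μ.map T = (μ.restrict {ω | a ω = 1}).map T + (μ.restrict {ω | a ω = 1}ᶜ).map T := by
    rw [← Measure.map_add _ _ hT, μ.restrict_add_restrict_compl
      (show MeasurableSet {ω | a ω = 1} from ha (measurableSet_singleton 1))]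
  have hT0 : (μ.restrict {ω | a₁ ω = 1}ᶜ).map T₁ = (μ.restrict {ω | a₂ ω = 1}ᶜ).map T₂ := by
    refine Measure.eq_of_add_eq_add_left (ν := (μ.restrict {ω | a₁ ω = 1}).map T₁) ?_
    rw [← hsplit T₁ a₁ hT₁ ha₁, hT1, ← hsplit T₂ a₂ hT₂ ha₂, hT]
  rw [map_prod_eq_add_of_zero_or_one hT₁ ha₁ h01₁, map_prod_eq_add_of_zero_or_one hT₂ ha₂ h01₂,
    hT1, hT0]

lemma map_restrict_eq_withDensity_of_forall_prod [IsFiniteMeasure μ] {Z : Ω → γ} {Y : Ω → β}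
    (hZ : Measurable Z) (hY : Measurable Y) {A : Set Ω} {g : γ → ℝ} (hg : Measurable g)
    (hg01 : ∀ x, g x ∈ Set.Icc (0 : ℝ) 1)
    (h : ∀ s W, MeasurableSet s → MeasurableSet W →
      μ.real (Z ⁻¹' s ∩ Y ⁻¹' W ∩ A) = ∫ ω in Z ⁻¹' s ∩ Y ⁻¹' W, g (Z ω) ∂μ) :
    (μ.restrict A).map (fun ω ↦ (Z ω, Y ω)) =
      (μ.map (fun ω ↦ (Z ω, Y ω))).withDensity (fun p ↦ ENNReal.ofReal (g p.1)) := by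
  have hZY : Measurable fun ω ↦ (Z ω, Y ω) := hZ.prodMk hY
  have hgZ : Integrable (fun ω ↦ g (Z ω)) μ :=
    (integrable_const (1 : ℝ)).mono (hg.comp hZ).aestronglyMeasurable
      (ae_of_all _ fun ω ↦ by simpa [abs_of_nonneg (hg01 _).1] using (hg01 (Z ω)).2)
  refine Measure.ext_prod fun {s W} hs hW ↦ ?_
  rw [Measure.map_apply hZY (hs.prod hW), Measure.restrict_apply (hZY (hs.prod hW)),
    withDensity_apply _ (hs.prod hW), setLIntegral_map (hs.prod hW) (by fun_prop) hZY,
    Set.mk_preimage_prod, ← ofReal_integral_eq_lintegral_ofReal hgZ.integrableOn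
      (ae_of_all _ fun ω ↦ (hg01 _).1), ← h s W hs hW, measureReal_def,
    ENNReal.ofReal_toReal (measure_ne_top μ _)]

end Laws

section Unconfoundedness

variable {Ω ι : Type*} {mΩ : MeasurableSpace Ω} {μ : Measure Ω}

lemma comap_pi_eq_sup_iSup_ne {γ : Type*} [MeasurableSpace γ] (X : ι → Ω → γ) (k : ι) :
    MeasurableSpace.comap (fun ω i ↦ X i ω) MeasurableSpace.pi =
      MeasurableSpace.comap (X k) inferInstance ⊔
        ⨆ (i) (_ : i ≠ k), MeasurableSpace.comap (X i) inferInstance := by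
  rw [← iSup_split_single (fun i ↦ MeasurableSpace.comap (X i) inferInstance) k,
    MeasurableSpace.pi, MeasurableSpace.comap_iSup]
  simp_rw [MeasurableSpace.comap_comp]
  rfl

lemma indep_iSup_ne_of_iIndep {m n : ι → MeasurableSpace Ω} (h_le : ∀ i, m i ≤ mΩ)
    (h : iIndep m μ) (hnm : ∀ i, n i ≤ m i) (k : ι) :
    Indep (m k) (⨆ (i) (_ : i ≠ k), n i) μ :=
  indep_of_indep_of_le (indep_iSup_of_disjoint h_le h disjoint_compl_right)
    (le_iSup₂ (f := fun i (_ : i ∈ ({k} : Set ι)) ↦ m i) k rfl)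
    (iSup₂_mono fun i _ ↦ hnm i)

variable [StandardBorelSpace Ω] [IsFiniteMeasure μ] {β γ : Type*} [MeasurableSpace β]
  [MeasurableSpace γ]

theorem measureReal_inter_treated_eq_setIntegral {X : ι → Ω → γ} {Y : ι → Ω → β} {a : Ω → ℝ}
    (hX : ∀ i, Measurable (X i)) (hY : ∀ i, Measurable (Y i)) (ha : Measurable a)
    (hind : iIndepFun (fun i ω ↦ (Y i ω, X i ω)) μ) (k : ι)
    {hle : MeasurableSpace.comap (fun ω i ↦ X i ω) MeasurableSpace.pi ≤ mΩ}
    (hYa : CondIndepFun _ hle (Y k) a μ) {h : γ → ℝ} (hh : Measurable h)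
    (hh01 : ∀ x, h x ∈ Set.Icc (0 : ℝ) 1)
    (hprop : μ[fun ω ↦ if a ω = 1 then (1 : ℝ) else 0 | MeasurableSpace.comap (X k) inferInstance]
      =ᵐ[μ] fun ω ↦ h (X k ω))
    {s : Set γ} {W : Set β} (hs : MeasurableSet s) (hW : MeasurableSet W) :
    μ.real (X k ⁻¹' s ∩ Y k ⁻¹' W ∩ {ω | a ω = 1}) =
      ∫ ω in X k ⁻¹' s ∩ Y k ⁻¹' W, h (X k ω) ∂μ := by
  have hXT : ∀ i, MeasurableSpace.comap (X i) inferInstance ≤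
      MeasurableSpace.comap (fun ω ↦ (Y i ω, X i ω)) inferInstance :=
    fun i ↦ (measurable_snd.comp (comap_measurable (fun ω ↦ (Y i ω, X i ω)))).comap_le
  have hindep := indep_iSup_ne_of_iIndep (fun i ↦ ((hY i).prodMk (hX i)).comap_le) hind.iIndep hXT k
  have hSA := (condIndepFun_iff_condExp_inter_preimage_eq_mul (hY k) ha).1 hYa W {1} hW
    (measurableSet_singleton 1)
  rw [comap_pi_eq_sup_iSup_ne X k] at hSA
  have hAH : μ⟦a ⁻¹' {1} | MeasurableSpace.comap (X k) inferInstance⟧ =ᵐ[μ] fun ω ↦ h (X k ω) := by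
    classical
    convert hprop using 2
    ext ω
    simp [Set.indicator_apply]
  exact measureReal_inter_inter_eq_setIntegral_of_condIndep (hXT k)
    ((hY k).prodMk (hX k)).comap_le (iSup₂_le fun i _ ↦ (hX i).comap_le) hindep ⟨s, hs, rfl⟩
    ⟨Prod.fst ⁻¹' W, measurable_fst hW, rfl⟩ (ha (measurableSet_singleton 1)) hSA
    (hh.comp (comap_measurable _)).stronglyMeasurable
    (fun ω ↦ by simpa [abs_of_nonneg (hh01 _).1] using (hh01 (X k ω)).2) hAH

end Unconfoundedness

/-- **Lemma A.5, second conclusion.** If the joint vector of potential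
responses `(R^{(n)}(1), R^{(n)}(0))` is conditionally independent of the assignment vector
`A^{(n)}` given `σ(X^{(n)})`, the triples `(R_i(1), R_i(0), X_i)` are i.i.d., and
`P(A_i = 1 | X_i) = h(X_i)` a.s. for a single measurable `h : ℝ^{d_x} → [0,1]` for every
`i`, then with observed responses `R_i = A_i·R_i(1) + (1 − A_i)·R_i(0)`, the random
vectors `(X_i, A_i, R_i)` are identically distributed across `i`. -/
theorem identically_distributed_observables
    {Ω : Type*} [MeasurableSpace Ω] [StandardBorelSpace Ω]
    (μ : Measure Ω) [IsProbabilityMeasure μ]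
    (n dx dr : ℕ)
    (X : Fin n → Ω → (Fin dx → ℝ)) (A : Fin n → Ω → ℝ)
    (R1 R0 : Fin n → Ω → (Fin dr → ℝ))
    (hX : ∀ i, Measurable (X i)) (hA : ∀ i, Measurable (A i))
    (hR1 : ∀ i, Measurable (R1 i)) (hR0 : ∀ i, Measurable (R0 i))
    (hA01 : ∀ i ω, A i ω = 0 ∨ A i ω = 1)
    -- joint unconfoundedness: (R^{(n)}(1), R^{(n)}(0)) ⫫ A^{(n)} | σ(X^{(n)})
    (hUnconf : CondIndepFun
      (MeasurableSpace.comap (fun ω => fun i => X i ω) inferInstance)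
      (Measurable.comap_le (measurable_pi_lambda _ fun i => hX i))
      (fun ω => (fun i => R1 i ω, fun i => R0 i ω))
      (fun ω => fun i => A i ω) μ)
    -- the triples (R_i(1), R_i(0), X_i) are i.i.d.
    (hIdent : ∀ i j : Fin n,
      Measure.map (fun ω => (R1 i ω, R0 i ω, X i ω)) μ
        = Measure.map (fun ω => (R1 j ω, R0 j ω, X j ω)) μ)
    (hIndep : iIndepFun
      (fun i ω => (R1 i ω, R0 i ω, X i ω)) μ)
    -- a single propensity function h : ℝ^{d_x} → [0,1] for all units
    (h : (Fin dx → ℝ) → ℝ) (hh : Measurable h)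
    (hh01 : ∀ x, h x ∈ Set.Icc (0 : ℝ) 1)
    (hprop : ∀ i, MeasureTheory.condExp (MeasurableSpace.comap (X i) inferInstance) μ
        (fun ω => if A i ω = 1 then (1 : ℝ) else 0) =ᵐ[μ] fun ω => h (X i ω))
    -- observed responses R_i = A_i·R_i(1) + (1 − A_i)·R_i(0)
    (R : Fin n → Ω → (Fin dr → ℝ))
    (hR : ∀ i, R i = fun ω => A i ω • R1 i ω + (1 - A i ω) • R0 i ω) :
    -- conclusion: (X_i, A_i, R_i) is identically distributed across i
    ∀ i j : Fin n,
      Measure.map (fun ω => (X i ω, A i ω, R i ω)) μ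
        = Measure.map (fun ω => (X j ω, A j ω, R j ω)) μ := by
  intro i j
  set T : Fin n → Ω → (Fin dx → ℝ) × (Fin dr → ℝ) × (Fin dr → ℝ) :=
    fun k ω ↦ (X k ω, R1 k ω, R0 k ω)
  have hT : ∀ k, Measurable (T k) := fun k ↦ (hX k).prodMk ((hR1 k).prodMk (hR0 k))
  have hobs : ∀ k, μ.map (fun ω ↦ (X k ω, A k ω, R k ω)) =
      (μ.map fun ω ↦ (T k ω, A k ω)).map
        fun p ↦ (p.1.1, p.2, p.2 • p.1.2.1 + (1 - p.2) • p.1.2.2) := fun k ↦ by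
    rw [Measure.map_map (by fun_prop) ((hT k).prodMk (hA k)), hR k]
    rfl
  have hlaw : μ.map (T i) = μ.map (T j) := by
    have hswap : ∀ k, μ.map (T k) =
        (μ.map fun ω ↦ (R1 k ω, R0 k ω, X k ω)).map fun p ↦ (p.2.2, p.1, p.2.1) := fun k ↦ by
      rw [Measure.map_map (by fun_prop) ((hR1 k).prodMk ((hR0 k).prodMk (hX k)))]
      rfl
    rw [hswap i, hswap j, hIdent i j]
  have hIndep' : iIndepFun (fun k ω ↦ ((R1 k ω, R0 k ω), X k ω)) μ :=
    hIndep.comp (fun _ p ↦ ((p.1, p.2.1), p.2.2)) fun _ ↦ by fun_prop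
  have htreated : ∀ k, (μ.restrict {ω | A k ω = 1}).map (T k) =
      (μ.map (T k)).withDensity fun p ↦ ENNReal.ofReal (h p.1) := fun k ↦
    map_restrict_eq_withDensity_of_forall_prod (hX k) ((hR1 k).prodMk (hR0 k)) hh hh01
      fun s W hs hW ↦ measureReal_inter_treated_eq_setIntegral hX (fun k ↦ (hR1 k).prodMk (hR0 k))
        (hA k) hIndep' k (hUnconf.comp (φ := fun p ↦ (p.1 k, p.2 k)) (ψ := fun a ↦ a k)
          (by fun_prop) (by fun_prop)) hh hh01 (hprop k) hs hW
  rw [hobs i, hobs j, map_prod_eq_of_zero_or_one (hT i) (hT j) (hA i) (hA j) (hA01 i) (hA01 j) hlaw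
    (by rw [htreated i, htreated j, hlaw])]
end

section
/- For a function f: ℝ^{d_x} → ℝ, positive integers ℓ < k, and points x₁, …, x_k ∈ ℝ^{d_x}, define h_f(x₁,…,x_k) = max over subsets I ⊆ {1,…,k} with |I| = ℓ of ( (1/ℓ)·Σ_{i∈I} f(x_i) − (1/(k−ℓ))·Σ_{i∉I} f(x_i) ) minus the minimum over such subsets of the same quantity. Then for all functions f, g: ℝ^{d_x} → ℝ and all x₁,…,x_k ∈ ℝ^{d_x}, |h_f(x₁,…,x_k) − h_g(x₁,…,x_k)|² ≤ 4k · Σ_{i=1}^{k} (f(x_i) − g(x_i))². (Lemma A.7.) -/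
/-- The within-block contrast `(1/ℓ)·Σ_{i∈I} v i − (1/(k−ℓ))·Σ_{i∉I} v i` associated to a
subset `I` of `{1,…,k}` of cardinality `ℓ`. -/
noncomputable def blockContrast (k ℓ : ℕ) (v : Fin k → ℝ) (I : Finset (Fin k)) : ℝ :=
  (1 / (ℓ : ℝ)) * ∑ i ∈ I, v i - (1 / ((k - ℓ : ℕ) : ℝ)) * ∑ i ∈ Iᶜ, v i

/-- `h_f(x₁,…,x_k)`: the range (max minus min) of the within-block contrasts of `v` over
all subsets `I ⊆ {1,…,k}` with `|I| = ℓ`. -/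
noncomputable def contrastRange (k ℓ : ℕ) (v : Fin k → ℝ) : ℝ :=
  sSup {r : ℝ | ∃ I : Finset (Fin k), I.card = ℓ ∧ r = blockContrast k ℓ v I}
    - sInf {r : ℝ | ∃ I : Finset (Fin k), I.card = ℓ ∧ r = blockContrast k ℓ v I}

/-! Each block contrast is a linear functional of `v` whose two coefficients `1/ℓ` and
`1/(k-ℓ)` are at most `1`, so it is `1`-Lipschitz for the `ℓ¹` norm; taking a maximum or a
minimum over the subsets `I` preserves this, so the range is `2`-Lipschitz for the `ℓ¹` norm,
and Cauchy–Schwarz bounds the squared `ℓ¹` norm by `k` times the squared `ℓ²` norm. -/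

open Finset

section FiniteSupInf

variable {ι : Type*} {s : Set ι} {a b : ι → ℝ} {ε : ℝ}

lemma sSup_image_le_sSup_image_add (hs : s.Finite) (hε : 0 ≤ ε)
    (h : ∀ i ∈ s, a i ≤ b i + ε) : sSup (a '' s) ≤ sSup (b '' s) + ε := by
  rcases s.eq_empty_or_nonempty with rfl | hne
  · simpa using hε
  refine csSup_le (hne.image a) ?_
  rintro _ ⟨i, hi, rfl⟩
  have hb : b i ≤ sSup (b '' s) := le_csSup (hs.image b).bddAbove ⟨i, hi, rfl⟩
  linarith [h i hi]

lemma sInf_image_le_sInf_image_add (hs : s.Finite) (hε : 0 ≤ ε)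
    (h : ∀ i ∈ s, a i ≤ b i + ε) : sInf (a '' s) ≤ sInf (b '' s) + ε := by
  rcases s.eq_empty_or_nonempty with rfl | hne
  · simpa using hε
  rw [← sub_le_iff_le_add]
  refine le_csInf (hne.image b) ?_
  rintro _ ⟨i, hi, rfl⟩
  have ha : sInf (a '' s) ≤ a i := csInf_le (hs.image a).bddBelow ⟨i, hi, rfl⟩
  linarith [h i hi]

lemma abs_sSup_image_sub_sSup_image_le (hs : s.Finite) (hε : 0 ≤ ε)
    (h : ∀ i ∈ s, |a i - b i| ≤ ε) : |sSup (a '' s) - sSup (b '' s)| ≤ ε := by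
  rw [abs_sub_le_iff, sub_le_iff_le_add, sub_le_iff_le_add, add_comm ε, add_comm ε]
  exact ⟨sSup_image_le_sSup_image_add hs hε fun i hi => by linarith [abs_le.mp (h i hi)],
    sSup_image_le_sSup_image_add hs hε fun i hi => by linarith [abs_le.mp (h i hi)]⟩

lemma abs_sInf_image_sub_sInf_image_le (hs : s.Finite) (hε : 0 ≤ ε)
    (h : ∀ i ∈ s, |a i - b i| ≤ ε) : |sInf (a '' s) - sInf (b '' s)| ≤ ε := by
  rw [abs_sub_le_iff, sub_le_iff_le_add, sub_le_iff_le_add, add_comm ε, add_comm ε]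
  exact ⟨sInf_image_le_sInf_image_add hs hε fun i hi => by linarith [abs_le.mp (h i hi)],
    sInf_image_le_sInf_image_add hs hε fun i hi => by linarith [abs_le.mp (h i hi)]⟩

end FiniteSupInf

section BlockContrast

variable {k : ℕ} (ℓ : ℕ)

lemma blockContrast_sub (v w : Fin k → ℝ) (I : Finset (Fin k)) :
    blockContrast k ℓ (v - w) I = blockContrast k ℓ v I - blockContrast k ℓ w I := by
  simp only [blockContrast, Pi.sub_apply, sum_sub_distrib]
  ring

lemma abs_blockContrast_le (u : Fin k → ℝ) (I : Finset (Fin k)) :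
    |blockContrast k ℓ u I| ≤ ∑ i, |u i| := by
  have coeff_le (n : ℕ) (X : ℝ) : |1 / (n : ℝ) * X| ≤ |X| := by
    rw [abs_mul, one_div, abs_of_nonneg (by positivity)]
    exact mul_le_of_le_one_left (abs_nonneg X) (Nat.cast_inv_le_one n)
  calc |blockContrast k ℓ u I|
      ≤ |∑ i ∈ I, u i| + |∑ i ∈ Iᶜ, u i| :=
        (abs_sub _ _).trans (add_le_add (coeff_le _ _) (coeff_le _ _))
    _ ≤ ∑ i ∈ I, |u i| + ∑ i ∈ Iᶜ, |u i| :=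
        add_le_add (abs_sum_le_sum_abs _ _) (abs_sum_le_sum_abs _ _)
    _ = ∑ i, |u i| := sum_add_sum_compl I _

lemma abs_blockContrast_sub_le (v w : Fin k → ℝ) (I : Finset (Fin k)) :
    |blockContrast k ℓ v I - blockContrast k ℓ w I| ≤ ∑ i, |v i - w i| := by
  simpa only [blockContrast_sub, Pi.sub_apply] using abs_blockContrast_le ℓ (v - w) I

lemma contrastRange_eq (v : Fin k → ℝ) :
    contrastRange k ℓ v = sSup (blockContrast k ℓ v '' {I | I.card = ℓ})
      - sInf (blockContrast k ℓ v '' {I | I.card = ℓ}) := by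
  simp only [contrastRange, Set.image, Set.mem_ofPred_eq, eq_comm]

lemma abs_contrastRange_sub_le (v w : Fin k → ℝ) :
    |contrastRange k ℓ v - contrastRange k ℓ w| ≤ 2 * ∑ i, |v i - w i| := by
  have hs : {I : Finset (Fin k) | I.card = ℓ}.Finite := Set.toFinite _
  have hε : 0 ≤ ∑ i, |v i - w i| := sum_nonneg fun i _ => abs_nonneg _
  have hsup := abs_sSup_image_sub_sSup_image_le hs hε fun I _ => abs_blockContrast_sub_le ℓ v w I
  have hinf := abs_sInf_image_sub_sInf_image_le hs hε fun I _ => abs_blockContrast_sub_le ℓ v w I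
  rw [abs_le] at hsup hinf
  rw [contrastRange_eq, contrastRange_eq, abs_le]
  constructor <;> linarith [hsup.1, hsup.2, hinf.1, hinf.2]

end BlockContrast

theorem contrastRange_sq_diff_le_general
    (dx k ℓ : ℕ)
    (f g : (Fin dx → ℝ) → ℝ) (x : Fin k → (Fin dx → ℝ)) :
    |contrastRange k ℓ (fun i => f (x i)) - contrastRange k ℓ (fun i => g (x i))| ^ 2
      ≤ 4 * (k : ℝ) * ∑ i, (f (x i) - g (x i)) ^ 2 := by
  have cauchySchwarz : (∑ i, |f (x i) - g (x i)|) ^ 2 ≤ k * ∑ i, (f (x i) - g (x i)) ^ 2 := by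
    simpa only [sq_abs, card_univ, Fintype.card_fin] using
      sq_sum_le_card_mul_sum_sq (s := univ) (f := fun i => |f (x i) - g (x i)|)
  calc _ ≤ (2 * ∑ i, |f (x i) - g (x i)|) ^ 2 :=
        pow_le_pow_left₀ (abs_nonneg _) (abs_contrastRange_sub_le ℓ _ _) 2
    _ = 4 * (∑ i, |f (x i) - g (x i)|) ^ 2 := by ring
    _ ≤ 4 * (k : ℝ) * ∑ i, (f (x i) - g (x i)) ^ 2 := by linarith

/-- **Lemma A.7.** For all `f, g : ℝ^{d_x} → ℝ` and all points
`x₁, …, x_k ∈ ℝ^{d_x}`,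
`|h_f(x₁,…,x_k) − h_g(x₁,…,x_k)|² ≤ 4k · Σ_{i=1}^k (f(x_i) − g(x_i))²`. -/
theorem contrastRange_sq_diff_le
    (dx k ℓ : ℕ) (hℓ : 1 ≤ ℓ) (hℓk : ℓ < k)
    (f g : (Fin dx → ℝ) → ℝ) (x : Fin k → (Fin dx → ℝ)) :
    |contrastRange k ℓ (fun i => f (x i)) - contrastRange k ℓ (fun i => g (x i))| ^ 2
      ≤ 4 * (k : ℝ) * ∑ i, (f (x i) - g (x i)) ^ 2 :=
  contrastRange_sq_diff_le_general dx k ℓ f g x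
end
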